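/- Let $\alpha_1,\dots,\alpha_{N+1}$ be exchangeable real-valued random variables and define $p = \frac{1}{N+1}\big(|\{i \le N+1 : \alpha_{N+1} > \alpha_i\}| + u\,|\{i \le N+1 : \alpha_{N+1} = \alpha_i\}|\big)$ where $u \sim \mathrm{Unif}(0,1)$ is independent of the $\alpha_i$. Then $p$ satisfies $P(p \le \epsilon) \le \epsilon$ for all $\epsilon \in [0,1]$. -/

import Mathlib

/-!
Write `b j` and `e j` for the numbers of scores below, resp. equal to, the score of `j`, so that
the p-value with `j` as test point is `p_j = (b j + u e j) / (N + 1)`. Exchangeability and the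
independence of `u` give every `p_j` the law of `p = p_{N+1}`, hence
`(N + 1) P(p ≤ ε) = E ∑ j P_u(p_j ≤ ε)`, the inner probability taken for fixed scores.
There `P_u(b j + u e j ≤ M) = clamp((M - b j) / e j)` is the average, over the ranks
`k = b j, …, b j + e j - 1`, of the length `clamp(M - k)` of `[k, k + 1] ∩ (-∞, M]`. The `e j`
members of the tie class of `j` share these ranks and distinct tie classes occupy disjoint ranks,
so the sum over `j` is at most `∑ k clamp(M - k) ≤ M = (N + 1) ε`.
-/

open MeasureTheory ProbabilityTheory Finset
open scoped ENNReal

namespace SmoothedConformal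

variable {ι : Type*} [Fintype ι]

noncomputable def countLT (a : ι → ℝ) (j : ι) : ℕ := #{i | a i < a j}

noncomputable def countEq (a : ι → ℝ) (j : ι) : ℕ := #{i | a j = a i}

noncomputable def smoothedPValue (a : ι → ℝ) (t : ℝ) (j : ι) : ℝ :=
  (countLT a j + t * countEq a j) / Fintype.card ι

/-- The ranks occupied by the tie class of `j`. -/
noncomputable def rankBlock (a : ι → ℝ) (j : ι) : Finset ℕ :=
  Ico (countLT a j) (countLT a j + countEq a j)

section Counts

variable (a : ι → ℝ)

lemma countEq_pos (j : ι) : 0 < countEq a j :=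
  card_pos.2 ⟨j, by simp⟩

lemma countEq_congr {j k : ι} (h : a j = a k) : countEq a j = countEq a k := by
  simp only [countEq, h]

lemma countLT_add_countEq (j : ι) : countLT a j + countEq a j = #{i | a i ≤ a j} := by
  classical
  rw [countLT, countEq, ← card_union_of_disjoint (disjoint_filter.2 fun i _ h h' => h.ne' h'),
    ← filter_or]
  congr 1
  ext i
  simp [le_iff_lt_or_eq, eq_comm]

lemma countLT_add_countEq_le_card (j : ι) : countLT a j + countEq a j ≤ Fintype.card ι :=
  (countLT_add_countEq a j).trans_le (card_filter_le _ _)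

lemma countLT_add_countEq_le_countLT {j k : ι} (h : a j < a k) :
    countLT a j + countEq a j ≤ countLT a k := by
  rw [countLT_add_countEq, countLT]
  exact card_le_card fun i hi => by
    simp only [mem_filter, mem_univ, true_and] at hi ⊢
    exact hi.trans_lt h

lemma countLT_comp (π : ι ≃ ι) (j : ι) : countLT (a ∘ π) j = countLT a (π j) :=
  card_equiv π (by simp)

lemma countEq_comp (π : ι ≃ ι) (j : ι) : countEq (a ∘ π) j = countEq a (π j) :=
  card_equiv π (by simp)

lemma smoothedPValue_comp (π : ι ≃ ι) (t : ℝ) (j : ι) :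
    smoothedPValue (a ∘ π) t j = smoothedPValue a t (π j) := by
  simp only [smoothedPValue, countLT_comp, countEq_comp]

lemma rankBlock_subset_range (j : ι) : rankBlock a j ⊆ range (Fintype.card ι) := by
  intro k hk
  have := countLT_add_countEq_le_card a j
  simp only [rankBlock, mem_Ico, mem_range] at hk ⊢
  omega

lemma eq_of_mem_rankBlock {k : ℕ} {j j' : ι} (hj : k ∈ rankBlock a j)
    (hj' : k ∈ rankBlock a j') : a j = a j' := by
  simp only [rankBlock, mem_Ico] at hj hj'
  rcases lt_trichotomy (a j) (a j') with h | h | h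
  · have := countLT_add_countEq_le_countLT a h
    omega
  · exact h
  · have := countLT_add_countEq_le_countLT a h
    omega

lemma sum_inv_countEq_le_one (k : ℕ) :
    ∑ j ∈ {j | k ∈ rankBlock a j}, (countEq a j : ℝ)⁻¹ ≤ 1 := by
  rcases (filter (fun j => k ∈ rankBlock a j) univ).eq_empty_or_nonempty with h | ⟨j₀, hj₀⟩
  · simp [h]
  rw [mem_filter] at hj₀
  have hval : ∀ j ∈ filter (fun j => k ∈ rankBlock a j) univ, a j₀ = a j := fun j hj =>
    eq_of_mem_rankBlock a hj₀.2 (mem_filter.1 hj).2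
  rw [sum_eq_card_nsmul (b := (countEq a j₀ : ℝ)⁻¹) fun j hj => by
      rw [countEq_congr a (hval j hj)], nsmul_eq_mul, ← div_eq_mul_inv,
    div_le_one (by exact_mod_cast countEq_pos a j₀)]
  exact_mod_cast card_le_card fun j hj => mem_filter.2 ⟨mem_univ j, hval j hj⟩

end Counts

lemma sum_range_min_one_max_zero_sub (n : ℕ) (x : ℝ) :
    ∑ k ∈ range n, min 1 (max 0 (x - k)) = min (n : ℝ) (max 0 x) := by
  induction n with
  | zero => simp
  | succ n ih =>
    rw [sum_range_succ, ih]
    push_cast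
    simp only [min_def, max_def]
    split_ifs <;> linarith

lemma min_one_max_zero_div (x : ℝ) {e : ℕ} (he : 0 < e) :
    min 1 (max 0 (x / e)) = (e : ℝ)⁻¹ * ∑ r ∈ range e, min 1 (max 0 (x - r)) := by
  have he' : (0 : ℝ) < e := by exact_mod_cast he
  rw [sum_range_min_one_max_zero_sub, inv_mul_eq_div, ← min_div_div_right he'.le,
    div_self he'.ne', ← max_div_div_right he'.le, zero_div]

lemma sum_min_one_max_zero_le (a : ι → ℝ) {M : ℝ} (hM : 0 ≤ M) :
    ∑ j, min 1 (max 0 ((M - countLT a j) / countEq a j)) ≤ M := by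
  calc ∑ j, min 1 (max 0 ((M - countLT a j) / countEq a j))
      = ∑ j, ∑ k ∈ rankBlock a j, (countEq a j : ℝ)⁻¹ * min 1 (max 0 (M - k)) := by
        refine sum_congr rfl fun j _ => ?_
        rw [min_one_max_zero_div _ (countEq_pos a j), mul_sum, rankBlock,
          sum_Ico_eq_sum_range, add_tsub_cancel_left]
        refine sum_congr rfl fun r _ => ?_
        push_cast
        ring_nf
    _ = ∑ k ∈ range (Fintype.card ι), ∑ j ∈ {j | k ∈ rankBlock a j},
          (countEq a j : ℝ)⁻¹ * min 1 (max 0 (M - k)) :=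
        sum_comm' fun j k => by
          simpa using fun hk => rankBlock_subset_range a j hk
    _ ≤ ∑ k ∈ range (Fintype.card ι), min 1 (max 0 (M - k)) := by
        refine sum_le_sum fun k _ => ?_
        rw [← sum_mul]
        exact mul_le_of_le_one_left (by positivity) (sum_inv_countEq_le_one a k)
    _ ≤ M := by
        rw [sum_range_min_one_max_zero_sub, max_eq_right hM]
        exact min_le_right _ _

lemma measurable_card_filter {X : Type*} [MeasurableSpace X] {p : X → ι → Prop}
    [∀ x, DecidablePred (p x)] (hp : ∀ i, MeasurableSet {x | p x i}) :
    Measurable fun x => (#{i | p x i} : ℝ) := by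
  simp only [card_filter, Nat.cast_sum, Nat.cast_ite, Nat.cast_one, Nat.cast_zero]
  exact Finset.measurable_sum _ fun i _ => Measurable.ite (hp i) measurable_const measurable_const

lemma measurable_smoothedPValue (j : ι) :
    Measurable fun q : (ι → ℝ) × ℝ => smoothedPValue q.1 q.2 j := by
  have hLT := measurable_card_filter (p := fun (a : ι → ℝ) i => a i < a j) fun i =>
    measurableSet_lt (measurable_pi_apply i) (measurable_pi_apply j)
  have hEq := measurable_card_filter (p := fun (a : ι → ℝ) i => a j = a i) fun i =>
    measurableSet_eq_fun (measurable_pi_apply j) (measurable_pi_apply i)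
  exact ((hLT.comp measurable_fst).add (measurable_snd.mul (hEq.comp measurable_fst))).div_const _

lemma setOf_smoothedPValue_le (a : ι → ℝ) (j : ι) (ε : ℝ) :
    {t | smoothedPValue a t j ≤ ε}
      = Set.Iic ((Fintype.card ι * ε - countLT a j) / countEq a j) := by
  have hn : (0 : ℝ) < Fintype.card ι := by exact_mod_cast Fintype.card_pos_iff.2 ⟨j⟩
  have he : (0 : ℝ) < countEq a j := by exact_mod_cast countEq_pos a j
  ext t
  rw [Set.mem_ofPred_eq, Set.mem_Iic, smoothedPValue, div_le_iff₀ hn, le_div_iff₀ he]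
  constructor <;> intro <;> linarith

lemma volume_restrict_Icc_zero_one_Iic (x : ℝ) :
    volume.restrict (Set.Icc 0 1) (Set.Iic x) = ENNReal.ofReal (min 1 (max 0 x)) := by
  have hinter : Set.Iic x ∩ Set.Icc 0 1 = Set.Icc 0 (min x 1) := by
    ext t
    simp only [Set.mem_inter_iff, Set.mem_Iic, Set.mem_Icc, le_min_iff]
    tauto
  rw [Measure.restrict_apply measurableSet_Iic, hinter, Real.volume_Icc]
  rcases le_total x 0 with h | h
  · rw [max_eq_left h, min_eq_right zero_le_one,
      ENNReal.ofReal_of_nonpos (by linarith [min_le_left x 1])]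
    simp
  · rw [max_eq_right h, sub_zero, min_comm]

lemma sum_volume_setOf_smoothedPValue_le (a : ι → ℝ) {ε : ℝ} (hε : 0 ≤ ε) :
    ∑ j, volume.restrict (Set.Icc 0 1) {t | smoothedPValue a t j ≤ ε}
      ≤ ENNReal.ofReal (Fintype.card ι * ε) := by
  simp only [setOf_smoothedPValue_le, volume_restrict_Icc_zero_one_Iic]
  rw [← ENNReal.ofReal_sum_of_nonneg fun j _ => by positivity]
  exact ENNReal.ofReal_le_ofReal (sum_min_one_max_zero_le a (by positivity))

lemma sum_prod_setOf_smoothedPValue_le (ν : Measure (ι → ℝ)) [IsProbabilityMeasure ν]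
    {ε : ℝ} (hε : 0 ≤ ε) :
    ∑ j, ν.prod (volume.restrict (Set.Icc 0 1)) {q | smoothedPValue q.1 q.2 j ≤ ε}
      ≤ ENNReal.ofReal (Fintype.card ι * ε) := by
  have hmeas j : MeasurableSet {q : (ι → ℝ) × ℝ | smoothedPValue q.1 q.2 j ≤ ε} :=
    measurableSet_le (measurable_smoothedPValue j) measurable_const
  simp only [Measure.prod_apply (hmeas _)]
  rw [← lintegral_finsetSum _ fun j _ => measurable_measure_prodMk_left (hmeas j)]
  calc _ ≤ ∫⁻ _, ENNReal.ofReal (Fintype.card ι * ε) ∂ν :=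
        lintegral_mono fun a => sum_volume_setOf_smoothedPValue_le a hε
    _ = ENNReal.ofReal (Fintype.card ι * ε) := by simp

lemma prod_setOf_smoothedPValue_le_eq (ν : Measure (ι → ℝ)) [SigmaFinite ν]
    (hν : ∀ π : Equiv.Perm ι, ν.map (· ∘ π) = ν) (μ : Measure ℝ) [SigmaFinite μ]
    (ε : ℝ) (j k : ι) :
    ν.prod μ {q | smoothedPValue q.1 q.2 j ≤ ε} = ν.prod μ {q | smoothedPValue q.1 q.2 k ≤ ε} := by
  classical
  set π : Equiv.Perm ι := Equiv.swap j k
  have hπ : Measurable fun a : ι → ℝ => a ∘ π := by fun_prop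
  have hpre : {q : (ι → ℝ) × ℝ | smoothedPValue q.1 q.2 j ≤ ε}
      = Prod.map (· ∘ π) id ⁻¹' {q | smoothedPValue q.1 q.2 k ≤ ε} := by
    ext q
    simp [smoothedPValue_comp, π]
  rw [hpre, ← Measure.map_apply (hπ.prodMap measurable_id)
      (measurableSet_le (measurable_smoothedPValue k) measurable_const),
    ← Measure.map_prod_map ν μ hπ measurable_id, hν, Measure.map_id]

theorem prod_setOf_smoothedPValue_le_le (ν : Measure (ι → ℝ)) [IsProbabilityMeasure ν]
    (hν : ∀ π : Equiv.Perm ι, ν.map (· ∘ π) = ν) (j : ι) {ε : ℝ} (hε : 0 ≤ ε) :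
    ν.prod (volume.restrict (Set.Icc 0 1)) {q | smoothedPValue q.1 q.2 j ≤ ε}
      ≤ ENNReal.ofReal ε := by
  have : Nonempty ι := ⟨j⟩
  refine (ENNReal.mul_le_mul_iff_right (by simp) (ENNReal.natCast_ne_top (Fintype.card ι))).1 ?_
  calc (Fintype.card ι : ℝ≥0∞) * ν.prod _ {q | smoothedPValue q.1 q.2 j ≤ ε}
      = ∑ k, ν.prod (volume.restrict (Set.Icc 0 1)) {q | smoothedPValue q.1 q.2 k ≤ ε} := by
        simp [prod_setOf_smoothedPValue_le_eq ν hν _ ε _ j]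
    _ ≤ ENNReal.ofReal (Fintype.card ι * ε) := sum_prod_setOf_smoothedPValue_le ν hε
    _ = Fintype.card ι * ENNReal.ofReal ε := by
        rw [ENNReal.ofReal_mul (by positivity), ENNReal.ofReal_natCast]

end SmoothedConformal

open SmoothedConformal in
/-- the smoothed conformal p-value built from `N + 1`
exchangeable scores and an independent Uniform(0,1) tie-breaker is valid:
`P(p ≤ ε) ≤ ε` for all `ε ∈ [0,1]`. -/
theorem smoothed_conformal_p_value_valid
    {Ω : Type*} [MeasurableSpace Ω]
    (P : Measure Ω) [IsProbabilityMeasure P] {N : ℕ}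
    (α : Fin (N + 1) → Ω → ℝ) (hαmeas : ∀ i, Measurable (α i))
    (hexch : ∀ π : Equiv.Perm (Fin (N + 1)),
      Measure.map (fun ω => fun i => α (π i) ω) P
        = Measure.map (fun ω => fun i => α i ω) P)
    (u : Ω → ℝ) (humeas : Measurable u)
    (hulaw : Measure.map u P = Measure.restrict volume (Set.Icc (0 : ℝ) 1))
    (huindep : IndepFun u (fun ω => fun i => α i ω) P)
    (p : Ω → ℝ)
    (hp : ∀ ω, p ω =
      (((Finset.univ.filter
          (fun i => α (Fin.last N) ω > α i ω)).card : ℝ)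
        + u ω * ((Finset.univ.filter
          (fun i => α (Fin.last N) ω = α i ω)).card : ℝ)) / (N + 1)) :
    ∀ ε : ℝ, 0 ≤ ε → ε ≤ 1 → P {ω | p ω ≤ ε} ≤ ENNReal.ofReal ε := by
  intro ε hε _
  set A : Ω → Fin (N + 1) → ℝ := fun ω i => α i ω
  have hA : Measurable A := measurable_pi_lambda _ hαmeas
  have : IsProbabilityMeasure (P.map A) := Measure.isProbabilityMeasure_map hA.aemeasurable
  have hjoint : P.map (fun ω => (A ω, u ω)) = (P.map A).prod (volume.restrict (Set.Icc 0 1)) := by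
    rw [← hulaw]
    exact (indepFun_iff_map_prod_eq_prod_map_map hA.aemeasurable humeas.aemeasurable).1
      huindep.symm
  have hAexch (π : Equiv.Perm (Fin (N + 1))) : (P.map A).map (· ∘ π) = P.map A := by
    rw [Measure.map_map (by fun_prop) hA]
    exact hexch π
  have hset : {ω | p ω ≤ ε}
      = (fun ω => (A ω, u ω)) ⁻¹' {q | smoothedPValue q.1 q.2 (Fin.last N) ≤ ε} := by
    ext ω
    simp [hp, smoothedPValue, countLT, countEq, A]
  rw [hset, ← Measure.map_apply (hA.prodMk humeas)
      (measurableSet_le (measurable_smoothedPValue _) measurable_const), hjoint]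
  exact prod_setOf_smoothedPValue_le_le _ hAexch _ hε
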